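/- arXiv:1605.07908 — 2 statements merged into one kernel-verified Lean document; each statement's English description precedes it below -/
import Mathlib

section
/- Elementary identity for the L² norm: for any open set A ⊆ X and u ∈ L²(X, m), ∫_A u² dm = sup over finite disjoint families of open subsets A_k ⊆ A with m(A_k) > 0 of Σ_k m(A_k)^{-1} ( ∫_{A_k} |u| dm )². -/
/-!
Cauchy–Schwarz on each piece, `m(B)⁻¹ (∫_B f)² ≤ ∫_B f²`, bounds every sum by `∫_A f²`.
Conversely, write
`m(B)⁻¹ (∫_B f)² = max_c ∫_B (2 c f - c²)` and note that for a step function `g`,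
`∫_A (2 g f - g²) = ∫_A f² - ∫_A (f - g)²`. So it suffices to approximate `f` in `L²(A)` by a
simple function `g = ∑ c 1_{E_c}` and then to replace its level sets `E_c` by disjoint open sets
`B_c ⊆ A` with `m (E_c ∆ B_c)` small; this is possible because `m` is weakly regular, and the
error it causes is controlled by Cauchy–Schwarz again. The theorem is the case `f = |u|`.
-/

open MeasureTheory Bornology
open scoped ENNReal

lemma two_mul_mul_sub_sq_mul_le_inv_mul_sq {μ a c : ℝ} (hμ : 0 ≤ μ) (ha : μ = 0 → a = 0) :
    2 * c * a - c ^ 2 * μ ≤ μ⁻¹ * a ^ 2 := by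
  rcases hμ.eq_or_lt with rfl | hμ
  · simp [ha rfl]
  · have key : μ⁻¹ * a ^ 2 - (2 * c * a - c ^ 2 * μ) = μ⁻¹ * (a - c * μ) ^ 2 := by
      field_simp; ring
    nlinarith [mul_nonneg (inv_nonneg.mpr hμ.le) (sq_nonneg (a - c * μ))]

namespace MeasureTheory

variable {X : Type*} [MeasurableSpace X] {m : Measure X} {f : X → ℝ} {s t : Set X}

lemma MemLp.integrableOn_of_measure_ne_top (hf : MemLp f 2 m) (ht : m t ≠ ∞) :
    IntegrableOn f t m :=
  have : IsFiniteMeasure (m.restrict t) :=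
    ⟨by rwa [Measure.restrict_apply_univ, lt_top_iff_ne_top]⟩
  (hf.restrict t).integrable one_le_two

lemma setIntegral_two_mul_sub_sq (hf : MemLp f 2 m) (ht : m t ≠ ∞) (c : ℝ) :
    ∫ x in t, (2 * c * f x - c ^ 2) ∂m = 2 * c * ∫ x in t, f x ∂m - c ^ 2 * m.real t := by
  rw [integral_sub ((hf.integrableOn_of_measure_ne_top ht).const_mul _) (integrableOn_const ht),
    integral_const_mul, setIntegral_const, smul_eq_mul, mul_comm (m.real t)]

lemma MemLp.integrableOn_two_mul_sub_sq (hf : MemLp f 2 m) (ht : m t ≠ ∞) (c : ℝ) :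
    IntegrableOn (fun x ↦ 2 * c * f x - c ^ 2) t m :=
  ((hf.integrableOn_of_measure_ne_top ht).const_mul _).sub (integrableOn_const ht)

lemma setIntegral_two_mul_sub_sq_le_setIntegral_sq (hf : MemLp f 2 m) (ht : m t ≠ ∞) (c : ℝ) :
    ∫ x in t, (2 * c * f x - c ^ 2) ∂m ≤ ∫ x in t, f x ^ 2 ∂m :=
  setIntegral_mono (hf.integrableOn_two_mul_sub_sq ht c) hf.integrable_sq.integrableOn
    fun x ↦ by nlinarith [sq_nonneg (f x - c)]

lemma setIntegral_two_mul_sub_sq_le_inv_mul_sq (hf : MemLp f 2 m) (ht : m t ≠ ∞) (c : ℝ) :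
    ∫ x in t, (2 * c * f x - c ^ 2) ∂m ≤ (m t).toReal⁻¹ * (∫ x in t, f x ∂m) ^ 2 := by
  rw [setIntegral_two_mul_sub_sq hf ht]
  refine two_mul_mul_sub_sq_mul_le_inv_mul_sq measureReal_nonneg fun h ↦ ?_
  rw [Measure.restrict_eq_zero.mpr ((measureReal_eq_zero_iff ht).mp h), integral_zero_measure]

lemma inv_mul_sq_setIntegral_le (hf : MemLp f 2 m) (t : Set X) :
    (m t).toReal⁻¹ * (∫ x in t, f x ∂m) ^ 2 ≤ ∫ x in t, f x ^ 2 ∂m := by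
  rcases eq_or_lt_of_le (measureReal_nonneg (μ := m) (s := t)) with h | h
  · rw [← measureReal_def, ← h, inv_zero, zero_mul]
    exact integral_nonneg fun x ↦ sq_nonneg _
  have ht : m t ≠ ∞ := fun h' ↦ h.ne' (by simp [measureReal_def, h'])
  calc (m t).toReal⁻¹ * (∫ x in t, f x ∂m) ^ 2
      = ∫ x in t, (2 * ((∫ x in t, f x ∂m) / m.real t) * f x
          - ((∫ x in t, f x ∂m) / m.real t) ^ 2) ∂m := by
        rw [setIntegral_two_mul_sub_sq hf ht, ← measureReal_def]
        field_simp
        ring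
    _ ≤ ∫ x in t, f x ^ 2 ∂m := setIntegral_two_mul_sub_sq_le_setIntegral_sq hf ht _

lemma sq_setIntegral_le (hf : MemLp f 2 m) (ht : m t ≠ ∞) :
    (∫ x in t, f x ∂m) ^ 2 ≤ m.real t * ∫ x in t, f x ^ 2 ∂m := by
  rcases eq_or_lt_of_le (measureReal_nonneg (μ := m) (s := t)) with h | h
  · rw [Measure.restrict_eq_zero.mpr ((measureReal_eq_zero_iff ht).mp h.symm)]
    simp
  · exact (inv_mul_le_iff₀ h).mp (inv_mul_sq_setIntegral_le hf t)

lemma abs_setIntegral_two_mul_sub_sq_le (hf : MemLp f 2 m) (ht : m t ≠ ∞) {δ : ℝ}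
    (htδ : m.real t ≤ δ) (c : ℝ) :
    |∫ x in t, (2 * c * f x - c ^ 2) ∂m| ≤
      2 * |c| * √(δ * ∫ x, f x ^ 2 ∂m) + c ^ 2 * δ := by
  have hsq : (∫ x in t, f x ∂m) ^ 2 ≤ δ * ∫ x, f x ^ 2 ∂m :=
    (sq_setIntegral_le hf ht).trans <| mul_le_mul htδ
      (setIntegral_le_integral hf.integrable_sq (.of_forall fun x ↦ sq_nonneg _))
      (integral_nonneg fun x ↦ sq_nonneg _) (measureReal_nonneg.trans htδ)
  rw [setIntegral_two_mul_sub_sq hf ht]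
  calc |2 * c * ∫ x in t, f x ∂m - c ^ 2 * m.real t|
      ≤ 2 * |c| * |∫ x in t, f x ∂m| + c ^ 2 * m.real t := by
        refine (abs_sub _ _).trans ?_
        rw [abs_mul, abs_mul, abs_two, abs_of_nonneg (mul_nonneg (sq_nonneg c) measureReal_nonneg)]
    _ ≤ 2 * |c| * √(δ * ∫ x, f x ^ 2 ∂m) + c ^ 2 * δ := by
        gcongr
        exact Real.abs_le_sqrt hsq

lemma setIntegral_two_mul_sub_sq_le_add (hf : MemLp f 2 m) (hs : MeasurableSet s)
    (ht : MeasurableSet t) (hsm : m s ≠ ∞) (htm : m t ≠ ∞) {δ : ℝ} (hst : m.real (s \ t) ≤ δ)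
    (hts : m.real (t \ s) ≤ δ) (c : ℝ) :
    ∫ x in s, (2 * c * f x - c ^ 2) ∂m ≤
      ∫ x in t, (2 * c * f x - c ^ 2) ∂m + 2 * (2 * |c| * √(δ * ∫ x, f x ^ 2 ∂m) + c ^ 2 * δ) := by
  rw [← integral_inter_add_sdiff ht (hf.integrableOn_two_mul_sub_sq hsm c),
    ← integral_inter_add_sdiff hs (hf.integrableOn_two_mul_sub_sq htm c), Set.inter_comm]
  have h₁ := abs_le.mp (abs_setIntegral_two_mul_sub_sq_le hf
    (ne_top_of_le_ne_top hsm (measure_mono Set.sdiff_subset)) hst c)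
  have h₂ := abs_le.mp (abs_setIntegral_two_mul_sub_sq_le hf
    (ne_top_of_le_ne_top htm (measure_mono Set.sdiff_subset)) hts c)
  linarith [h₁.2, h₂.1]

lemma MemLp.exists_simpleFunc_integral_sq_sub_lt (hf : MemLp f 2 m) {ε : ℝ} (hε : 0 < ε) :
    ∃ g : SimpleFunc X ℝ, ∫ x, (f x - g x) ^ 2 ∂m < ε ∧ MemLp g 2 m := by
  obtain ⟨g, hfg, hg⟩ := hf.exists_simpleFunc_eLpNorm_sub_lt ENNReal.ofNat_ne_top
    (ENNReal.ofReal_pos.mpr (Real.sqrt_pos.mpr hε)).ne'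
  refine ⟨g, ?_, hg⟩
  rw [(hf.sub hg).eLpNorm_eq_integral_rpow_norm two_ne_zero ENNReal.ofNat_ne_top,
    ENNReal.ofReal_lt_ofReal_iff (Real.sqrt_pos.mpr hε)] at hfg
  simp only [ENNReal.toReal_ofNat, Real.rpow_two, Pi.sub_apply, Real.norm_eq_abs, sq_abs] at hfg
  rwa [← one_div, ← Real.sqrt_eq_rpow,
    Real.sqrt_lt_sqrt_iff (integral_nonneg fun x ↦ sq_nonneg _)] at hfg

lemma SimpleFunc.integral_two_mul_sub_sq_eq_sum (g : SimpleFunc X ℝ) (hf : MemLp f 2 m)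
    (hg : MemLp g 2 m) :
    ∫ x, (2 * g x * f x - g x ^ 2) ∂m =
      ∑ c ∈ g.range.filter (· ≠ 0), ∫ x in g ⁻¹' {c}, (2 * c * f x - c ^ 2) ∂m := by
  have hfin : ∀ c ∈ g.range.filter (· ≠ 0), m (g ⁻¹' {c}) ≠ ∞ := fun c hc ↦
    (g.measure_preimage_lt_top_of_memLp two_ne_zero ENNReal.ofNat_ne_top hg c
      (Finset.mem_filter.mp hc).2).ne
  have hsum : (fun x ↦ 2 * g x * f x - g x ^ 2) = fun x ↦
      ∑ c ∈ g.range.filter (· ≠ 0), (g ⁻¹' {c}).indicator (fun x ↦ 2 * c * f x - c ^ 2) x := by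
    classical
    ext x
    simp only [Set.indicator_apply, Set.mem_preimage, Set.mem_singleton_iff, Finset.sum_ite_eq,
      Finset.mem_filter, g.mem_range_self, true_and]
    rcases eq_or_ne (g x) 0 with h | h <;> simp [h]
  rw [hsum, integral_finsetSum _ fun c hc ↦
    ((hf.integrableOn_two_mul_sub_sq (hfin c hc) c).integrable_indicator (g.measurableSet_fiber c))]
  exact Finset.sum_congr rfl fun c _ ↦ integral_indicator (g.measurableSet_fiber c)

lemma exists_finset_sub_lt_sum_setIntegral_two_mul_sub_sq (hf : MemLp f 2 m) {A : Set X}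
    (hA : MeasurableSet A) {ε : ℝ} (hε : 0 < ε) :
    ∃ (s : Finset ℝ) (E : ℝ → Set X), (∀ c ∈ s, MeasurableSet (E c)) ∧ (∀ c ∈ s, m (E c) ≠ ∞) ∧
      (∀ c ∈ s, E c ⊆ A) ∧ (s : Set ℝ).PairwiseDisjoint E ∧
      ∫ x in A, f x ^ 2 ∂m - ε < ∑ c ∈ s, ∫ x in E c, (2 * c * f x - c ^ 2) ∂m := by
  obtain ⟨g, hfg, hg⟩ := (hf.restrict A).exists_simpleFunc_integral_sq_sub_lt hε
  refine ⟨g.range.filter (· ≠ 0), fun c ↦ g ⁻¹' {c} ∩ A,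
    fun c _ ↦ (g.measurableSet_fiber c).inter hA, fun c hc ↦ ?_, fun c _ ↦ Set.inter_subset_right,
    (Set.pairwiseDisjoint_fiber g _).mono fun c ↦ Set.inter_subset_left, ?_⟩
  · rw [← Measure.restrict_apply (g.measurableSet_fiber c)]
    exact (g.measure_preimage_lt_top_of_memLp two_ne_zero ENNReal.ofNat_ne_top hg c
      (Finset.mem_filter.mp hc).2).ne
  calc ∫ x in A, f x ^ 2 ∂m - ε
      < ∫ x in A, f x ^ 2 ∂m - ∫ x in A, (f x - g x) ^ 2 ∂m := by linarith
    _ = ∫ x in A, (2 * g x * f x - g x ^ 2) ∂m := by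
        have hfg2 : Integrable (fun x ↦ (f x - g x) ^ 2) (m.restrict A) :=
          ((hf.restrict A).sub hg).integrable_sq
        rw [← integral_sub (hf.restrict A).integrable_sq hfg2]
        congr with x
        ring
    _ = _ := by
        rw [g.integral_two_mul_sub_sq_eq_sum (hf.restrict A) hg]
        simp_rw [Measure.restrict_restrict (g.measurableSet_fiber _)]

end MeasureTheory

lemma Finset.exists_isOpen_pairwiseDisjoint_superset {X ι : Type*} [PseudoEMetricSpace X]
    {s : Finset ι} {F : ι → Set X} (hF : ∀ i ∈ s, IsClosed (F i))
    (hdisj : (s : Set ι).PairwiseDisjoint F) :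
    ∃ U : ι → Set X, (∀ i ∈ s, IsOpen (U i) ∧ F i ⊆ U i) ∧ (s : Set ι).PairwiseDisjoint U := by
  classical
  refine ⟨fun i ↦ ⋂ j ∈ s.erase i, {x | Metric.infEDist x (F i) < Metric.infEDist x (F j)},
    fun i hi ↦ ⟨isOpen_biInter_finset fun j _ ↦
      isOpen_lt Metric.continuous_infEDist Metric.continuous_infEDist, fun x hx ↦ ?_⟩, ?_⟩
  · simp only [Set.mem_iInter, Set.mem_ofPred_eq, Metric.infEDist_zero_of_mem hx]
    intro j hj
    rw [Metric.infEDist_pos_iff_notMem_closure, (hF j (Finset.mem_of_mem_erase hj)).closure_eq]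
    exact Set.disjoint_left.mp
      (hdisj hi (Finset.mem_of_mem_erase hj) (Finset.ne_of_mem_erase hj).symm) hx
  · intro i hi j hj hij
    refine Set.disjoint_left.mpr fun x hxi hxj ↦ ?_
    simp only [Set.mem_iInter, Set.mem_ofPred_eq] at hxi hxj
    exact lt_asymm (hxi j (Finset.mem_erase.mpr ⟨hij.symm, hj⟩))
      (hxj i (Finset.mem_erase.mpr ⟨hij, hi⟩))

lemma MeasureTheory.Measure.weaklyRegular_of_isBounded {X : Type*} [PseudoMetricSpace X]
    [MeasurableSpace X] [BorelSpace X] (m : Measure X)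
    (hm : ∀ s : Set X, IsBounded s → m s < ∞) : m.WeaklyRegular := by
  rcases isEmpty_or_nonempty X with hX | ⟨⟨x₀⟩⟩
  · have : IsFiniteMeasure m := ⟨by simp [Set.univ_eq_empty_iff.mpr hX]⟩
    infer_instance
  have : m.OuterRegular := by
    refine .of_restrict (s := fun n : ℕ ↦ Metric.ball x₀ n) (fun n ↦ ?_)
      (fun n ↦ Metric.isOpen_ball) (Metric.iUnion_ball_nat x₀).symm.subset
    have : IsFiniteMeasure (m.restrict (Metric.ball x₀ n)) :=
      ⟨by simpa using hm _ Metric.isBounded_ball⟩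
    infer_instance
  exact ⟨.of_pseudoMetrizableSpace m⟩

lemma MeasureTheory.exists_isOpen_pairwiseDisjoint_approx {X ι : Type*} [PseudoEMetricSpace X]
    [MeasurableSpace X] [OpensMeasurableSpace X] {m : Measure X} [m.WeaklyRegular] {A : Set X}
    (hA : IsOpen A) {s : Finset ι} {E : ι → Set X} (hE : ∀ i ∈ s, MeasurableSet (E i))
    (hEm : ∀ i ∈ s, m (E i) ≠ ∞) (hEA : ∀ i ∈ s, E i ⊆ A) (hdisj : (s : Set ι).PairwiseDisjoint E)
    {δ : ℝ≥0∞} (hδ : δ ≠ 0) :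
    ∃ B : ι → Set X, (∀ i ∈ s, IsOpen (B i) ∧ B i ⊆ A ∧ m (B i) ≠ ∞ ∧ m (E i \ B i) < δ ∧
      m (B i \ E i) < δ) ∧ (s : Set ι).PairwiseDisjoint B := by
  choose! F hFE hFc hEF using fun i (hi : i ∈ s) ↦
    (hE i hi).exists_isClosed_sdiff_lt (hEm i hi) hδ
  choose! V hEV hVo hVfin hVE using fun i (hi : i ∈ s) ↦
    (hE i hi).exists_isOpen_sdiff_lt (hEm i hi) hδ
  obtain ⟨U, hU, hUdisj⟩ := s.exists_isOpen_pairwiseDisjoint_superset hFc (hdisj.mono_on hFE)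
  refine ⟨fun i ↦ U i ∩ V i ∩ A, fun i hi ↦ ⟨((hU i hi).1.inter (hVo i hi)).inter hA,
    Set.inter_subset_right, ?_, ?_, ?_⟩,
    hUdisj.mono fun i ↦ Set.inter_subset_left.trans Set.inter_subset_left⟩
  · exact ne_top_of_le_ne_top (hVfin i hi).ne
      (measure_mono (Set.inter_subset_left.trans Set.inter_subset_right))
  · refine (measure_mono (Set.sdiff_subset_sdiff_right ?_)).trans_lt (hEF i hi)
    exact Set.subset_inter (Set.subset_inter (hU i hi).2 ((hFE i hi).trans (hEV i hi)))
      ((hFE i hi).trans (hEA i hi))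
  · exact (measure_mono (Set.sdiff_subset_sdiff_left
      (Set.inter_subset_left.trans Set.inter_subset_right))).trans_lt (hVE i hi)

namespace MeasureTheory

variable {X : Type*} [MeasurableSpace X] [TopologicalSpace X] {m : Measure X} {f : X → ℝ}
  {A : Set X}

def openPartitionSums (m : Measure X) (f : X → ℝ) (A : Set X) : Set ℝ :=
  {r | ∃ (n : ℕ) (B : Fin n → Set X),
    (∀ k, IsOpen (B k)) ∧ (∀ k, B k ⊆ A) ∧ Pairwise (Function.onFun Disjoint B) ∧
    (∀ k, 0 < m (B k)) ∧ r = ∑ k, ((m (B k)).toReal)⁻¹ * (∫ x in B k, f x ∂m) ^ 2}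

lemma sum_mem_openPartitionSums {ι : Type*} {s : Finset ι} {B : ι → Set X}
    (hBo : ∀ i ∈ s, IsOpen (B i)) (hBA : ∀ i ∈ s, B i ⊆ A) (hB : (s : Set ι).PairwiseDisjoint B) :
    ∑ i ∈ s, ((m (B i)).toReal)⁻¹ * (∫ x in B i, f x ∂m) ^ 2 ∈ openPartitionSums m f A := by
  classical
  set K := s.filter fun i ↦ 0 < m (B i)
  have hKs : ∀ k, (K.equivFin.symm k : ι) ∈ s := fun k ↦
    Finset.mem_of_mem_filter _ (K.equivFin.symm k).2
  refine ⟨K.card, fun k ↦ B (K.equivFin.symm k), fun k ↦ hBo _ (hKs k), fun k ↦ hBA _ (hKs k),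
    fun k l hkl ↦ hB (hKs k) (hKs l) fun h ↦ hkl (K.equivFin.symm.injective (Subtype.ext h)),
    fun k ↦ (Finset.mem_filter.mp (K.equivFin.symm k).2).2, ?_⟩
  rw [← Finset.sum_filter_of_ne fun i _ hi ↦
      pos_iff_ne_zero.mpr fun (h : m (B i) = 0) ↦ hi (by simp [h]), ← Finset.sum_coe_sort K]
  exact (Equiv.sum_comp K.equivFin.symm _).symm

lemma le_setIntegral_sq_of_mem_openPartitionSums [OpensMeasurableSpace X] (hf : MemLp f 2 m)
    {r : ℝ} (hr : r ∈ openPartitionSums m f A) : r ≤ ∫ x in A, f x ^ 2 ∂m := by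
  obtain ⟨n, B, hBo, hBA, hBd, -, rfl⟩ := hr
  calc ∑ k, ((m (B k)).toReal)⁻¹ * (∫ x in B k, f x ∂m) ^ 2
      ≤ ∑ k, ∫ x in B k, f x ^ 2 ∂m :=
        Finset.sum_le_sum fun k _ ↦ inv_mul_sq_setIntegral_le hf (B k)
    _ = ∫ x in ⋃ k, B k, f x ^ 2 ∂m :=
        (integral_iUnion_fintype (fun k ↦ (hBo k).measurableSet) hBd
          fun k ↦ hf.integrable_sq.integrableOn).symm
    _ ≤ ∫ x in A, f x ^ 2 ∂m :=
        setIntegral_mono_set hf.integrable_sq.integrableOn (.of_forall fun x ↦ sq_nonneg _)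
          (Set.iUnion_subset hBA).eventuallyLE

end MeasureTheory

lemma MeasureTheory.exists_mem_openPartitionSums_sub_lt {X : Type*} [PseudoMetricSpace X]
    [MeasurableSpace X] [BorelSpace X] {m : Measure X} (hm : ∀ s : Set X, IsBounded s → m s < ∞)
    {f : X → ℝ} (hf : MemLp f 2 m) {A : Set X} (hA : IsOpen A) {ε : ℝ} (hε : 0 < ε) :
    ∃ r ∈ openPartitionSums m f A, ∫ x in A, f x ^ 2 ∂m - ε < r := by
  have := m.weaklyRegular_of_isBounded hm
  obtain ⟨s, E, hEm, hEfin, hEA, hEdisj, hE⟩ :=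
    exists_finset_sub_lt_sum_setIntegral_two_mul_sub_sq hf hA.measurableSet (half_pos hε)
  obtain ⟨δ, hδε, hδ⟩ : ∃ δ : ℝ, ∑ c ∈ s, 2 * (2 * |c| * √(δ * ∫ x, f x ^ 2 ∂m) + c ^ 2 * δ)
      < ε / 2 ∧ 0 < δ := by
    have hcont : Continuous fun δ : ℝ ↦
        ∑ c ∈ s, 2 * (2 * |c| * √(δ * ∫ x, f x ^ 2 ∂m) + c ^ 2 * δ) := by fun_prop
    have htends := (hcont.tendsto 0).mono_left (nhdsWithin_le_nhds (s := Set.Ioi 0))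
    simp only [zero_mul, Real.sqrt_zero, mul_zero, add_zero, Finset.sum_const_zero] at htends
    exact ((htends.eventually (gt_mem_nhds (half_pos hε))).and self_mem_nhdsWithin).exists
  obtain ⟨B, hB, hBdisj⟩ := exists_isOpen_pairwiseDisjoint_approx hA hEm hEfin hEA hEdisj
    (ENNReal.ofReal_pos.mpr hδ).ne'
  refine ⟨_, sum_mem_openPartitionSums (fun c hc ↦ (hB c hc).1) (fun c hc ↦ (hB c hc).2.1) hBdisj,
    ?_⟩
  have hqE : ∀ c ∈ s, ∫ x in E c, (2 * c * f x - c ^ 2) ∂m ≤ ∫ x in B c, (2 * c * f x - c ^ 2) ∂m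
      + 2 * (2 * |c| * √(δ * ∫ x, f x ^ 2 ∂m) + c ^ 2 * δ) := fun c hc ↦ by
    obtain ⟨hBo, -, hBfin, hEB, hBE⟩ := hB c hc
    exact setIntegral_two_mul_sub_sq_le_add hf (hEm c hc) hBo.measurableSet (hEfin c hc) hBfin
      (ENNReal.toReal_le_of_le_ofReal hδ.le hEB.le) (ENNReal.toReal_le_of_le_ofReal hδ.le hBE.le) c
  have hqB : ∀ c ∈ s, ∫ x in B c, (2 * c * f x - c ^ 2) ∂m ≤
      ((m (B c)).toReal)⁻¹ * (∫ x in B c, f x ∂m) ^ 2 := fun c hc ↦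
    setIntegral_two_mul_sub_sq_le_inv_mul_sq hf (hB c hc).2.2.1 c
  have hsum := Finset.sum_le_sum hqE
  rw [Finset.sum_add_distrib] at hsum
  linarith [Finset.sum_le_sum hqB]

theorem MeasureTheory.setIntegral_sq_eq_sSup_openPartitionSums {X : Type*} [PseudoMetricSpace X]
    [MeasurableSpace X] [BorelSpace X] {m : Measure X} (hm : ∀ s : Set X, IsBounded s → m s < ∞)
    {f : X → ℝ} (hf : MemLp f 2 m) {A : Set X} (hA : IsOpen A) :
    ∫ x in A, f x ^ 2 ∂m = sSup (openPartitionSums m f A) := by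
  have hle := fun r (hr : r ∈ openPartitionSums m f A) ↦
    le_setIntegral_sq_of_mem_openPartitionSums hf hr
  have h0 : (0 : ℝ) ∈ openPartitionSums m f A := by
    simpa using sum_mem_openPartitionSums (m := m) (f := f) (A := A) (s := (∅ : Finset (Set X)))
      (B := id) (by simp) (by simp) (by simp)
  refine le_antisymm (le_of_forall_pos_lt_add fun ε hε ↦ ?_) (csSup_le ⟨0, h0⟩ hle)
  obtain ⟨r, hr, hlt⟩ := exists_mem_openPartitionSums_sub_lt hm hf hA hε
  linarith [le_csSup ⟨_, hle⟩ hr]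

/-- Elementary identity for the `L²` norm: for `u ∈ L²(X,m)` and `A ⊆ X` open,
`∫_A u² dm` equals the supremum, over finite disjoint families of open subsets
`B k ⊆ A` with `m (B k) > 0`, of `Σ_k m(B k)⁻¹ (∫_{B k} |u| dm)²`. -/
theorem stmt_6 {X : Type*} [MetricSpace X] [MeasurableSpace X] [BorelSpace X]
    (m : Measure X) (hloc : ∀ s : Set X, IsBounded s → m s < ⊤)
    (u : X → ℝ) (hu : MemLp u 2 m) (A : Set X) (hA : IsOpen A) :
    ∫ x in A, (u x) ^ 2 ∂m =
      sSup {r : ℝ | ∃ (n : ℕ) (B : Fin n → Set X),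
        (∀ k, IsOpen (B k)) ∧ (∀ k, B k ⊆ A) ∧ Pairwise (Function.onFun Disjoint B) ∧
        (∀ k, 0 < m (B k)) ∧
        r = ∑ k, ((m (B k)).toReal)⁻¹ * (∫ x in B k, |u x| ∂m) ^ 2} := by
  simp_rw [← sq_abs (u _)]
  exact setIntegral_sq_eq_sSup_openPartitionSums hloc hu.abs hA
end

section
/- Let (X, d) be a geodesic (length) metric space and Ω⁺, Ω⁻ disjoint nonempty open subsets of X. Define r(Ω^±) := sup_{x ∈ Ω^±} inf_{y ∈ ∂Ω^±} d(x, y) (the inradius). Then r(Ω⁺) + r(Ω⁻) ≤ diam(X). -/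
/-! A near-geodesic `γ` from `x ∈ Ω⁺` to `y ∈ Ω⁻` of length `L ≈ d(x, y)` leaves `Ω⁺` through
`∂Ω⁺` at some time `s`. Since `γ s ∈ closure Ω⁺` lies outside the open set `Ω⁻`, the rest of the
path still has to enter `Ω⁻` through `∂Ω⁻`, at a time `t ≥ s`. Hence
`d(x, ∂Ω⁺) + d(y, ∂Ω⁻) ≤ L s + L (1 - t) ≤ L`, and taking suprema gives the bound by `diam X`. -/

open Set EMetric ENNReal

theorem IsPreconnected.inter_frontier_nonempty {X : Type*} [TopologicalSpace X] {s t : Set X}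
    (hs : IsPreconnected s) (hst : (s ∩ t).Nonempty) (hst' : (s \ t).Nonempty) :
    (s ∩ frontier t).Nonempty := by
  rw [frontier_eq_closure_inter_closure]
  refine isPreconnected_closed_iff.1 hs _ _ isClosed_closure isClosed_closure ?_
    (hst.mono (inter_subset_inter_right _ subset_closure))
    (hst'.mono (inter_subset_inter_right _ subset_closure))
  exact fun x _ => (em (x ∈ t)).imp (subset_closure ·) (subset_closure ·)

theorem exists_mem_Icc_mem_frontier {X : Type*} [TopologicalSpace X] {γ : ℝ → X} {a b : ℝ}
    (hab : a ≤ b) (hγ : ContinuousOn γ (Icc a b)) {U : Set X} (ha : γ a ∈ U) (hb : γ b ∉ U) :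
    ∃ t ∈ Icc a b, γ t ∈ frontier U := by
  obtain ⟨_, ⟨t, ht, rfl⟩, htU⟩ := (isPreconnected_Icc.image γ hγ).inter_frontier_nonempty
    ⟨γ a, mem_image_of_mem γ (left_mem_Icc.2 hab), ha⟩
    ⟨γ b, mem_image_of_mem γ (right_mem_Icc.2 hab), hb⟩
  exact ⟨t, ht, htU⟩

theorem exists_mem_frontier_le_mem_frontier {X : Type*} [TopologicalSpace X] {U V : Set X}
    (hV : IsOpen V) (hUV : Disjoint U V) {γ : ℝ → X} (hγ : ContinuousOn γ (Icc 0 1))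
    (h0 : γ 0 ∈ U) (h1 : γ 1 ∈ V) :
    ∃ s t : ℝ, 0 ≤ s ∧ s ≤ t ∧ t ≤ 1 ∧ γ s ∈ frontier U ∧ γ t ∈ frontier V := by
  obtain ⟨s, hs, hsU⟩ :=
    exists_mem_Icc_mem_frontier zero_le_one hγ h0 (hUV.notMem_of_mem_right h1)
  have hsV : γ s ∈ Vᶜ := (hUV.closure_left hV).notMem_of_mem_left (frontier_subset_closure hsU)
  obtain ⟨t, ht, htV⟩ :=
    exists_mem_Icc_mem_frontier hs.2 (hγ.mono (Icc_subset_Icc_left hs.1)) hsV (not_not.2 h1)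
  rw [frontier_compl] at htV
  exact ⟨s, t, hs.1, ht.1, ht.2, hsU, htV⟩

theorem infEDist_frontier_add_infEDist_frontier_le {X : Type*} [PseudoMetricSpace X]
    {U V : Set X} (hV : IsOpen V) (hUV : Disjoint U V) {γ : ℝ → X} {L : ℝ}
    (hγ : ∀ s t : ℝ, s ∈ Icc (0 : ℝ) 1 → t ∈ Icc (0 : ℝ) 1 → dist (γ s) (γ t) ≤ L * |s - t|)
    (h0 : γ 0 ∈ U) (h1 : γ 1 ∈ V) :
    Metric.infEDist (γ 0) (frontier U) + Metric.infEDist (γ 1) (frontier V) ≤ ENNReal.ofReal L := by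
  have hcont : ContinuousOn γ (Icc 0 1) :=
    (LipschitzOnWith.of_dist_le' fun s hs t ht => hγ s t hs ht).continuousOn
  obtain ⟨s, t, hs0, hst, ht1, hsU, htV⟩ := exists_mem_frontier_le_mem_frontier hV hUV hcont h0 h1
  have h0I : (0 : ℝ) ∈ Icc (0 : ℝ) 1 := left_mem_Icc.2 zero_le_one
  have h1I : (1 : ℝ) ∈ Icc (0 : ℝ) 1 := right_mem_Icc.2 zero_le_one
  have hs : s ∈ Icc (0 : ℝ) 1 := ⟨hs0, hst.trans ht1⟩
  have ht : t ∈ Icc (0 : ℝ) 1 := ⟨hs0.trans hst, ht1⟩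
  have hL : 0 ≤ L := by simpa using dist_nonneg.trans (hγ 0 1 h0I h1I)
  calc Metric.infEDist (γ 0) (frontier U) + Metric.infEDist (γ 1) (frontier V)
      ≤ edist (γ 0) (γ s) + edist (γ t) (γ 1) := by
        rw [edist_comm (γ t)]
        exact add_le_add (Metric.infEDist_le_edist_of_mem hsU) (Metric.infEDist_le_edist_of_mem htV)
    _ = ENNReal.ofReal (dist (γ 0) (γ s) + dist (γ t) (γ 1)) := by
        rw [edist_dist, edist_dist, ofReal_add dist_nonneg dist_nonneg]
    _ ≤ ENNReal.ofReal L := by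
        refine ofReal_le_ofReal ?_
        calc dist (γ 0) (γ s) + dist (γ t) (γ 1)
            ≤ L * |0 - s| + L * |t - 1| := add_le_add (hγ 0 s h0I hs) (hγ t 1 ht h1I)
          _ = L * (1 - (t - s)) := by
              rw [abs_of_nonpos (by linarith), abs_of_nonpos (by linarith)]
              ring
          _ ≤ L := by nlinarith

theorem stmt_12_general {X : Type*} [MetricSpace X]
    (hlen : ∀ x y : X, ∀ ε > (0 : ℝ), ∃ γ : ℝ → X, γ 0 = x ∧ γ 1 = y ∧
      ∀ s t : ℝ, s ∈ Icc (0 : ℝ) 1 → t ∈ Icc (0 : ℝ) 1 →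
        dist (γ s) (γ t) ≤ (dist x y + ε) * |s - t|)
    (Ωp Ωn : Set X) (hon : IsOpen Ωn)
    (hnep : Ωp.Nonempty) (hnen : Ωn.Nonempty) (hdisj : Disjoint Ωp Ωn) :
    (⨆ x ∈ Ωp, infEdist x (frontier Ωp)) + (⨆ x ∈ Ωn, infEdist x (frontier Ωn)) ≤
      diam (univ : Set X) := by
  refine ENNReal.biSup_add_biSup_le hnep hnen fun x hx y hy => ?_
  refine le_trans ?_ (Metric.edist_le_ediam_of_mem (mem_univ x) (mem_univ y))
  refine ENNReal.le_of_forall_pos_le_add fun ε hε _ => ?_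
  obtain ⟨γ, rfl, rfl, hγ⟩ := hlen x y ε (by exact_mod_cast hε)
  calc _ ≤ ENNReal.ofReal (dist (γ 0) (γ 1) + ε) :=
        infEDist_frontier_add_infEDist_frontier_le hon hdisj hγ hx hy
    _ = edist (γ 0) (γ 1) + ε := by
        rw [ofReal_add dist_nonneg ε.coe_nonneg, edist_dist, ofReal_coe_nnreal]

/-- Let `(X,d)` be a length (geodesic) metric space — encoded by the existence, for all
`x y` and `ε > 0`, of an almost-geodesic path from `x` to `y` of length at most
`d(x,y) + ε` — and let `Ω⁺, Ω⁻` be disjoint nonempty open subsets of `X` with nonempty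
boundaries. With `r(Ω^±) = sup_{x ∈ Ω^±} inf_{y ∈ ∂Ω^±} d(x,y)` the inradius,
one has `r(Ω⁺) + r(Ω⁻) ≤ diam X`. -/
theorem stmt_12 {X : Type*} [MetricSpace X]
    (hlen : ∀ x y : X, ∀ ε > (0 : ℝ), ∃ γ : ℝ → X, γ 0 = x ∧ γ 1 = y ∧
      ∀ s t : ℝ, s ∈ Icc (0 : ℝ) 1 → t ∈ Icc (0 : ℝ) 1 →
        dist (γ s) (γ t) ≤ (dist x y + ε) * |s - t|)
    (Ωp Ωn : Set X) (hop : IsOpen Ωp) (hon : IsOpen Ωn)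
    (hnep : Ωp.Nonempty) (hnen : Ωn.Nonempty) (hdisj : Disjoint Ωp Ωn)
    (hbp : (frontier Ωp).Nonempty) (hbn : (frontier Ωn).Nonempty) :
    (⨆ x ∈ Ωp, infEdist x (frontier Ωp)) + (⨆ x ∈ Ωn, infEdist x (frontier Ωn)) ≤
      diam (univ : Set X) :=
  stmt_12_general hlen Ωp Ωn hon hnep hnen hdisj
end
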